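/- Let G = (V,E) be a connected graph, Ĝ = (V, E∪F) an augmentation, and E' ⊆ E ∪ F such that G' = (V, E') is connected. Then LMC(G', Ĝ) ⊆ LMC(G, Ĝ) if and only if E' ⊆ E. -/

import Mathlib

/-! `⇐` holds because a decomposition of `G'` is one of `G` when `E' ⊆ E`. For `⇒`, take an
edge `uv` of `G'` and the decomposition of `G'` whose only non-singleton block is `{u, v}`.
Its lifted vector is a `0/1` point, hence an extreme point of the unit cube, so if it lies in
`LMC(G, Ĝ)` it is the lifted vector of some decomposition `Q` of `G`. Then `u` and `v` share a
block of `Q`; that block is `G`-connected, so it contains a `G`-edge, which `Q` does not cut.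
Having the same lifted vector as `Q`, the first decomposition does not cut it either, so this
edge is `uv`. -/

open Finset

open scoped Classical

variable {V : Type*}

/-- A decomposition of a graph `G`: a partition of the node set all of whose blocks
induce connected subgraphs. -/
def IsDecomposition (G : SimpleGraph V) (P : Set (Set V)) : Prop :=
  Setoid.IsPartition P ∧ ∀ U ∈ P, (G.induce U).Connected

/-- Two nodes lie in a common block of `P`. -/
def SameBlock (P : Set (Set V)) (u v : V) : Prop :=
  ∃ U ∈ P, u ∈ U ∧ v ∈ U

/-- The edge `e` straddles two distinct blocks of `P`. -/
def Crosses (P : Set (Set V)) (e : Sym2 V) : Prop :=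
  ∃ u v, e = s(u, v) ∧ ¬ SameBlock P u v

/-- The multicut of `G` induced by a decomposition `P`. -/
def inducedMulticut (G : SimpleGraph V) (P : Set (Set V)) : Set (Sym2 V) :=
  {e | e ∈ G.edgeSet ∧ Crosses P e}

/-- `M` is a multicut of `G`. -/
def IsMulticut (G : SimpleGraph V) (M : Set (Sym2 V)) : Prop :=
  ∃ P, IsDecomposition G P ∧ M = inducedMulticut G P

/-- The characteristic vector (in the ambient space `Sym2 V → ℝ`, with coordinates
outside the edge set of `H` pinned to `0`) of the multicut of `H` induced by `P`. -/
noncomputable def multicutVec (H : SimpleGraph V) (P : Set (Set V)) : Sym2 V → ℝ :=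
  fun e => if e ∈ H.edgeSet ∧ Crosses P e then 1 else 0

/-- Characteristic vectors of multicuts of `H` lifted from `G`. -/
def liftedVectors (G H : SimpleGraph V) : Set (Sym2 V → ℝ) :=
  {x | ∃ P, IsDecomposition G P ∧ x = multicutVec H P}

/-- The lifted multicut polytope with respect to `G` and `H`. -/
def LMC (G H : SimpleGraph V) : Set (Sym2 V → ℝ) :=
  convexHull ℝ (liftedVectors G H)

/-- The inequality `f x ≤ b` is valid for `P` and its equality set has affine dimension
`|E ∪ F| - 1`, i.e. one less than the dimension of the corresponding lifted multicut
polytope for the augmented graph `H`. -/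
def DefinesFacet (H : SimpleGraph V) (P : Set (Sym2 V → ℝ))
    (f : (Sym2 V → ℝ) → ℝ) (b : ℝ) : Prop :=
  (∀ x ∈ P, f x ≤ b) ∧
  Module.finrank ℝ (affineSpan ℝ {x | x ∈ P ∧ f x = b}).direction + 1 = Nat.card H.edgeSet

open SimpleGraph

lemma sameBlock_comm {P : Set (Set V)} {a b : V} : SameBlock P a b ↔ SameBlock P b a :=
  ⟨fun ⟨U, hU, ha, hb⟩ => ⟨U, hU, hb, ha⟩, fun ⟨U, hU, ha, hb⟩ => ⟨U, hU, hb, ha⟩⟩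

lemma crosses_mk_iff {P : Set (Set V)} {a b : V} : Crosses P s(a, b) ↔ ¬ SameBlock P a b := by
  refine ⟨?_, fun h => ⟨a, b, rfl, h⟩⟩
  rintro ⟨x, y, hxy, hP⟩
  rcases Sym2.eq_iff.mp hxy with ⟨rfl, rfl⟩ | ⟨rfl, rfl⟩
  · exact hP
  · exact sameBlock_comm.not.mp hP

lemma sameBlock_classes_iff (r : Setoid V) {a b : V} : SameBlock r.classes a b ↔ r a b := by
  refine ⟨?_, fun h => ⟨{x | r x b}, r.mem_classes b, h, r.refl b⟩⟩
  rintro ⟨_, ⟨y, rfl⟩, ha, hb⟩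
  exact r.trans ha (r.symm hb)

lemma isDecomposition_classes {G : SimpleGraph V} (r : Setoid V)
    (hr : ∀ a b, r a b → a ≠ b → G.Adj a b) : IsDecomposition G r.classes := by
  refine ⟨r.isPartition_classes, ?_⟩
  rintro _ ⟨y, rfl⟩
  have : Nonempty {x | r x y} := ⟨⟨y, r.refl y⟩⟩
  have hclique : G.IsClique {x | r x y} := fun a ha b hb hab =>
    hr a b (r.trans ha (r.symm hb)) hab
  rw [induce_eq_top.mpr hclique]
  exact connected_top

lemma IsDecomposition.mono {G G' : SimpleGraph V} (h : G' ≤ G) {P : Set (Set V)}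
    (hP : IsDecomposition G' P) : IsDecomposition G P :=
  ⟨hP.1, fun U hU => (hP.2 U hU).mono fun _ _ hab => h hab⟩

lemma IsDecomposition.exists_adj_of_sameBlock {G : SimpleGraph V} {P : Set (Set V)}
    (hP : IsDecomposition G P) {u v : V} (huv : u ≠ v) (h : SameBlock P u v) :
    ∃ a b, SameBlock P a b ∧ G.Adj a b := by
  obtain ⟨U, hU, hu, hv⟩ := h
  obtain ⟨w⟩ := (hP.2 U hU).preconnected ⟨u, hu⟩ ⟨v, hv⟩
  have hw : ¬ w.Nil := Walk.not_nil_of_ne (by simpa [Subtype.ext_iff] using huv)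
  exact ⟨u, w.getVert 1, ⟨U, hU, hu, (w.getVert 1).2⟩, w.adj_snd hw⟩

/-- The partition of `V` whose only non-singleton block is `{u, v}`. -/
noncomputable def edgeSetoid (u v : V) : Setoid V :=
  Setoid.ker (Function.update id v u)

lemma edgeSetoid_iff {u v a b : V} : edgeSetoid u v a b ↔ a = b ∨ s(a, b) = s(u, v) := by
  change Function.update id v u a = Function.update id v u b ↔ _
  simp only [Function.update_apply, id, Sym2.eq_iff]
  split_ifs <;> grind

lemma isDecomposition_edgeSetoid {G : SimpleGraph V} {u v : V} (huv : G.Adj u v) :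
    IsDecomposition G (edgeSetoid u v).classes := by
  refine isDecomposition_classes _ fun a b hab hne => ?_
  rcases edgeSetoid_iff.mp hab with h | h
  · exact absurd h hne
  · rw [← mem_edgeSet, h]
    exact huv

lemma mem_of_mem_convexHull_of_forall_mem_zero_one {ι : Type*} {A : Set (ι → ℝ)}
    (hA : A ⊆ Set.univ.pi fun _ => Set.Icc 0 1) {x : ι → ℝ} (hx : x ∈ convexHull ℝ A)
    (h01 : ∀ i, x i ∈ ({0, 1} : Set ℝ)) : x ∈ A := by
  have hcube : Convex ℝ (Set.univ.pi fun _ : ι => Set.Icc (0 : ℝ) 1) :=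
    convex_pi fun _ _ => convex_Icc 0 1
  have hext : x ∈ (Set.univ.pi fun _ : ι => Set.Icc (0 : ℝ) 1).extremePoints ℝ := by
    rw [extremePoints_pi]
    intro i _
    rw [Set.extremePoints_Icc zero_le_one]
    exact h01 i
  exact extremePoints_convexHull_subset
    (inter_extremePoints_subset_extremePoints_of_subset (convexHull_min hA hcube) ⟨hx, hext⟩)

lemma multicutVec_mem_zero_one (H : SimpleGraph V) (P : Set (Set V)) (e : Sym2 V) :
    multicutVec H P e ∈ ({0, 1} : Set ℝ) := by
  unfold multicutVec
  split_ifs <;> simp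

lemma crosses_iff_of_multicutVec_eq {H : SimpleGraph V} {P Q : Set (Set V)}
    (h : multicutVec H P = multicutVec H Q) {e : Sym2 V} (he : e ∈ H.edgeSet) :
    Crosses P e ↔ Crosses Q e := by
  have he' := congrFun h e
  simp only [multicutVec, he, true_and] at he'
  split_ifs at he' <;> simp_all

lemma multicutVec_mem_LMC_iff {G H : SimpleGraph V} {P : Set (Set V)} :
    multicutVec H P ∈ LMC G H ↔ multicutVec H P ∈ liftedVectors G H := by
  refine ⟨fun h => mem_of_mem_convexHull_of_forall_mem_zero_one ?_ h
    (multicutVec_mem_zero_one H P), fun h => subset_convexHull ℝ _ h⟩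
  rintro _ ⟨Q, -, rfl⟩ e -
  obtain h | h : multicutVec H Q e = 0 ∨ multicutVec H Q e = 1 := multicutVec_mem_zero_one H Q e
  all_goals simp [h]

lemma LMC_mono {G G' : SimpleGraph V} (h : G' ≤ G) (H : SimpleGraph V) :
    LMC G' H ⊆ LMC G H :=
  convexHull_mono fun _ ⟨P, hP, hx⟩ => ⟨P, hP.mono h, hx⟩

lemma adj_of_multicutVec_edgeSetoid_mem_LMC {G H : SimpleGraph V} (hGH : G ≤ H) {u v : V}
    (huv : H.Adj u v) (hmem : multicutVec H (edgeSetoid u v).classes ∈ LMC G H) :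
    G.Adj u v := by
  by_contra hnot
  obtain ⟨Q, hQ, hPQ⟩ := multicutVec_mem_LMC_iff.mp hmem
  have hP : ¬ Crosses (edgeSetoid u v).classes s(u, v) := by
    rw [crosses_mk_iff, not_not, sameBlock_classes_iff]
    exact edgeSetoid_iff.mpr (Or.inr rfl)
  have hsame : SameBlock Q u v := by
    have hQuv := (crosses_iff_of_multicutVec_eq hPQ huv).not.mp hP
    rwa [crosses_mk_iff, not_not] at hQuv
  obtain ⟨a, b, hQab, hab⟩ := hQ.exists_adj_of_sameBlock (H.ne_of_adj huv) hsame
  have hPab : Crosses (edgeSetoid u v).classes s(a, b) := by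
    rw [crosses_mk_iff, sameBlock_classes_iff, edgeSetoid_iff]
    rintro (h | h)
    · exact hab.ne h
    · exact hnot (by rw [← mem_edgeSet, ← h]; exact hab)
  exact crosses_mk_iff.mp ((crosses_iff_of_multicutVec_eq hPQ (hGH hab)).mp hPab) hQab

theorem lmc_subset_iff_general
    {V : Type*} (G G' Gh : SimpleGraph V)
    (hle : G ≤ Gh) (hle' : G' ≤ Gh) :
    LMC G' Gh ⊆ LMC G Gh ↔ G' ≤ G := by
  refine ⟨fun hsub u v huv => ?_, fun h => LMC_mono h Gh⟩
  have hmem : multicutVec Gh (edgeSetoid u v).classes ∈ LMC G' Gh :=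
    subset_convexHull ℝ _ ⟨_, isDecomposition_edgeSetoid huv, rfl⟩
  exact adj_of_multicutVec_edgeSetoid_mem_LMC hle (hle' huv) (hsub hmem)

/-- for connected `G'` with edge set contained in that of the augmentation
`Gh`, one has `LMC(G', Gh) ⊆ LMC(G, Gh)` iff `E' ⊆ E`. -/
theorem lmc_subset_iff
    {V : Type*} [Fintype V] (G G' Gh : SimpleGraph V)
    (hG : G.Connected) (hG' : G'.Connected)
    (hle : G ≤ Gh) (hle' : G' ≤ Gh) :
    LMC G' Gh ⊆ LMC G Gh ↔ G' ≤ G :=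
  lmc_subset_iff_general G G' Gh hle hle'
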